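/- arXiv:0811.1976 — 7 statements merged into one kernel-verified Lean document; each statement's English description precedes it below -/
import Mathlib

section
/- Let F be a lawful functor on Type that preserves weak pullbacks. Then relation lifting distributes over relational composition: for all relations R : α → β → Prop and Q : β → γ → Prop and all x : F α, z : F γ, LiftR F (R • Q) x z holds if and only if there exists y : F β with LiftR F R x y and LiftR F Q y z. -/
/-- Relation lifting of a relation `R : α → β → Prop` along a functor `F`. -/
def LiftR (F : Type → Type) [Functor F] {α β : Type} (R : α → β → Prop)
    (x : F α) (y : F β) : Prop :=
  ∃ u : F {p : α × β // R p.1 p.2},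
    (fun p => p.1.1) <$> u = x ∧ (fun p => p.1.2) <$> u = y

/-- Relational composition: `(RelComp R Q) a c` iff there is `b` with `R a b` and `Q b c`. -/
def RelComp {α β γ : Type} (R : α → β → Prop) (Q : β → γ → Prop) : α → γ → Prop :=
  fun a c => ∃ b, R a b ∧ Q b c

/-- `F` preserves weak pullbacks. -/
def PreservesWeakPullbacks (F : Type → Type) [Functor F] : Prop :=
  ∀ ⦃α β γ : Type⦄ (f : α → γ) (g : β → γ) (x : F α) (y : F β),
    f <$> x = g <$> y →
    ∃ u : F {p : α × β // f p.1 = g p.2},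
      (fun p => p.1.1) <$> u = x ∧ (fun p => p.1.2) <$> u = y

/-- If `F` preserves weak pullbacks, relation lifting distributes over
relational composition. -/
theorem liftR_relComp (F : Type → Type) [Functor F] [LawfulFunctor F]
    (hF : PreservesWeakPullbacks F)
    {α β γ : Type} (R : α → β → Prop) (Q : β → γ → Prop) (x : F α) (z : F γ) :
    LiftR F (RelComp R Q) x z ↔ ∃ y : F β, LiftR F R x y ∧ LiftR F Q y z := by
  constructor
  · rintro ⟨u, hx, hz⟩
    refine ⟨(fun p => p.2.choose) <$> u, ⟨(fun p => ⟨(p.1.1, p.2.choose), p.2.choose_spec.1⟩) <$> u, ?_, ?_⟩, ⟨(fun p => ⟨(p.2.choose, p.1.2), p.2.choose_spec.2⟩) <$> u, ?_, ?_⟩⟩ <;>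
      simp only [← comp_map, Function.comp_def] <;> first | exact hx | exact hz | rfl
  · rintro ⟨y, ⟨u, hux, huy⟩, ⟨v, hvy, hvz⟩⟩
    obtain ⟨w, hw1, hw2⟩ := hF (fun p => p.1.2) (fun q => q.1.1) u v (by rw [huy, hvy])
    refine ⟨(fun s => ⟨(s.1.1.1.1, s.1.2.1.2), s.1.1.1.2, s.1.1.2, s.2 ▸ s.1.2.2⟩) <$> w, ?_, ?_⟩
    · rw [← hux, ← hw1]; simp only [← comp_map]; rfl
    · rw [← hvz, ← hw2]; simp only [← comp_map]; rfl
end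

section
/- Let F be a lawful functor on Type. If relation lifting distributes over relational composition, i.e., for all types α, β, γ, all relations R : α → β → Prop, Q : β → γ → Prop, and all x : F α, z : F γ, LiftR F (R • Q) x z holds iff there exists y : F β with LiftR F R x y and LiftR F Q y z, then F preserves weak pullbacks. -/
/-- If relation lifting distributes over relational composition, then `F`
preserves weak pullbacks. -/
theorem preservesWeakPullbacks_of_liftR_relComp (F : Type → Type)
    [Functor F] [LawfulFunctor F]
    (h : ∀ {α β γ : Type} (R : α → β → Prop) (Q : β → γ → Prop) (x : F α) (z : F γ),
      LiftR F (RelComp R Q) x z ↔ ∃ y : F β, LiftR F R x y ∧ LiftR F Q y z) :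
    PreservesWeakPullbacks F := by
  intro α β γ f g x y hxy
  -- R a c := f a = c,  Q c b := c = g b
  have key : LiftR F (RelComp (fun (a : α) (c : γ) => f a = c)
      (fun (c : γ) (b : β) => c = g b)) x y := by
    rw [h]
    refine ⟨f <$> x, ⟨(fun a => ⟨(a, f a), rfl⟩) <$> x, ?_, ?_⟩,
      ⟨(fun b => ⟨(g b, b), rfl⟩) <$> y, ?_, ?_⟩⟩
    · simp [← comp_map, Function.comp_def]
    · simp [← comp_map, Function.comp_def]
    · rw [← comp_map]; simpa [Function.comp_def] using hxy.symm
    · simp [← comp_map, Function.comp_def]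
  obtain ⟨u, hu1, hu2⟩ := key
  refine ⟨(fun p => ⟨p.1, ?_⟩) <$> u, ?_, ?_⟩
  · obtain ⟨c, hc1, hc2⟩ := p.2; exact hc1.trans hc2
  · rw [← comp_map]; exact hu1
  · rw [← comp_map]; exact hu2
end

section
/- The relation lifting of the power set functor is the Egli–Milner lifting: for every relation R : α → β → Prop and all sets X : Set α, Y : Set β, there exists u : Set {p : α × β // R p.1 p.2} with (fun p => p.1.1) '' u = X and (fun p => p.1.2) '' u = Y, if and only if (for every a ∈ X there exists b ∈ Y with R a b) and (for every b ∈ Y there exists a ∈ X with R a b). -/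
/-- The relation lifting of the power set functor is the Egli–Milner lifting. -/
theorem powerset_liftR_eq_egliMilner {α β : Type} (R : α → β → Prop)
    (X : Set α) (Y : Set β) :
    (∃ u : Set {p : α × β // R p.1 p.2},
        (fun p => p.1.1) '' u = X ∧ (fun p => p.1.2) '' u = Y) ↔
    ((∀ a ∈ X, ∃ b ∈ Y, R a b) ∧ (∀ b ∈ Y, ∃ a ∈ X, R a b)) := by
  constructor
  · rintro ⟨u, rfl, rfl⟩
    constructor
    · rintro a ⟨⟨⟨a', b⟩, hr⟩, hu, rfl⟩
      exact ⟨b, ⟨_, hu, rfl⟩, hr⟩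
    · rintro b ⟨⟨⟨a, b'⟩, hr⟩, hu, rfl⟩
      exact ⟨a, ⟨_, hu, rfl⟩, hr⟩
  · rintro ⟨h1, h2⟩
    refine ⟨{p | p.1.1 ∈ X ∧ p.1.2 ∈ Y}, ?_, ?_⟩
    · ext a
      constructor
      · rintro ⟨⟨⟨a', b⟩, hr⟩, ⟨hx, hy⟩, rfl⟩
        exact hx
      · intro ha
        obtain ⟨b, hb, hr⟩ := h1 a ha
        exact ⟨⟨(a, b), hr⟩, ⟨ha, hb⟩, rfl⟩
    · ext b
      constructor
      · rintro ⟨⟨⟨a, b'⟩, hr⟩, ⟨hx, hy⟩, rfl⟩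
        exact hy
      · intro hb
        obtain ⟨a, ha, hr⟩ := h2 b hb
        exact ⟨⟨(a, b), hr⟩, ⟨ha, hb⟩, rfl⟩
end

section
/- The finite multiset functor preserves weak pullbacks: for all functions f : α → γ, g : β → γ and all multisets x : Multiset α, y : Multiset β with x.map f = y.map g, there exists a multiset u : Multiset (α × β) such that f p.1 = g p.2 for every p ∈ u, u.map Prod.fst = x, and u.map Prod.snd = y. -/
/-- The finite multiset functor preserves weak pullbacks. -/
theorem multiset_preservesWeakPullbacks {α β γ : Type}
    (f : α → γ) (g : β → γ) (x : Multiset α) (y : Multiset β)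
    (h : x.map f = y.map g) :
    ∃ u : Multiset (α × β), (∀ p ∈ u, f p.1 = g p.2) ∧
      u.map Prod.fst = x ∧ u.map Prod.snd = y := by
  induction x using Multiset.induction generalizing y with
  | empty =>
    simp only [Multiset.map_zero] at h
    have : y = 0 := by
      rw [eq_comm, Multiset.map_eq_zero] at h
      exact h
    exact ⟨0, by simp, by simp, by simp [this]⟩
  | cons a s ih =>
    have hmem : f a ∈ y.map g := by
      rw [← h]; simp
    obtain ⟨b, hb, hgb⟩ := Multiset.mem_map.mp hmem
    obtain ⟨t, rfl⟩ := Multiset.exists_cons_of_mem hb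
    simp only [Multiset.map_cons, hgb] at h
    have h' : s.map f = t.map g := by
      exact (Multiset.cons_inj_right _).mp h
    obtain ⟨u, hu1, hu2, hu3⟩ := ih t h'
    refine ⟨(a, b) ::ₘ u, ?_, ?_, ?_⟩
    · intro p hp
      rcases Multiset.mem_cons.mp hp with rfl | hp
      · exact hgb.symm
      · exact hu1 p hp
    · simp [hu2]
    · simp [hu3]
end

section
/- The class of weak pullback preserving functors is closed under exponentiation by a fixed type: if F is a lawful functor on Type that preserves weak pullbacks and D is any type, then the functor H with H X = D → F X (acting on functions by postcomposition with the F-action) also preserves weak pullbacks. -/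
/-- The exponent of the functor `F` by a fixed type `D`: `X ↦ (D → F X)`. -/
def ExpFunctor (D : Type) (F : Type → Type) (X : Type) : Type := D → F X

instance (D : Type) (F : Type → Type) [Functor F] : Functor (ExpFunctor D F) where
  map f h := fun d => f <$> h d

/-- Weak pullback preserving functors are closed under exponentiation by a
fixed type `D`. -/
theorem expFunctor_preservesWeakPullbacks
    (D : Type) (F : Type → Type) [Functor F] [LawfulFunctor F]
    (hF : PreservesWeakPullbacks F) :
    PreservesWeakPullbacks (ExpFunctor D F) := by
  intro α β γ f g x y h
  have h' : ∀ d : D, f <$> x d = g <$> y d := fun d => congrFun h d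
  choose u hu1 hu2 using fun d => hF f g (x d) (y d) (h' d)
  exact ⟨u, funext hu1, funext hu2⟩
end

section
/- For the power set functor, lifted membership is characterized as follows: for X : Set α and ℬ : Set (Set α), the pair (X, ℬ) is in the relation lifting of the membership relation (· ∈ ·) : α → Set α → Prop (i.e., there exists u : Set {p : α × Set α // p.1 ∈ p.2} with (fun p => p.1.1) '' u = X and (fun p => p.1.2) '' u = ℬ) if and only if X ⊆ ⋃₀ ℬ and X ∩ B is nonempty for every B ∈ ℬ. -/
/-- For the power set functor, the lifted membership relation relates `X` to
`ℬ` iff `X ⊆ ⋃₀ ℬ` and `X ∩ B` is nonempty for every `B ∈ ℬ`. -/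
theorem powerset_lifted_membership {α : Type} (X : Set α) (ℬ : Set (Set α)) :
    (∃ u : Set {p : α × Set α // p.1 ∈ p.2},
        (fun p => p.1.1) '' u = X ∧ (fun p => p.1.2) '' u = ℬ) ↔
    (X ⊆ ⋃₀ ℬ ∧ ∀ B ∈ ℬ, (X ∩ B).Nonempty) := by
  constructor
  · rintro ⟨u, hX, hB⟩
    constructor
    · rintro a ha
      rw [← hX] at ha
      obtain ⟨p, hp, rfl⟩ := ha
      exact ⟨p.1.2, hB ▸ ⟨p, hp, rfl⟩, p.2⟩
    · rintro B hBmem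
      rw [← hB] at hBmem
      obtain ⟨p, hp, rfl⟩ := hBmem
      exact ⟨p.1.1, hX ▸ ⟨p, hp, rfl⟩, p.2⟩
  · rintro ⟨hsub, hne⟩
    refine ⟨{p | p.1.1 ∈ X ∧ p.1.2 ∈ ℬ}, ?_, ?_⟩
    · ext a
      constructor
      · rintro ⟨p, ⟨h1, _⟩, rfl⟩; exact h1
      · intro ha
        obtain ⟨B, hB, haB⟩ := hsub ha
        exact ⟨⟨(a, B), haB⟩, ⟨ha, hB⟩, rfl⟩
    · ext B
      constructor
      · rintro ⟨p, ⟨_, h2⟩, rfl⟩; exact h2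
      · intro hB
        obtain ⟨a, haX, haB⟩ := hne B hB
        exact ⟨⟨(a, B), haB⟩, ⟨haX, hB⟩, rfl⟩
end

section
/- For the power set functor, redistributions are characterized as follows: ℬ : Set (Set α) is a redistribution of 𝒳 : Set (Set α) (i.e., for every X ∈ 𝒳, the pair (X, ℬ) lies in the relation lifting of the membership relation (· ∈ ·) : α → Set α → Prop) if and only if ⋃₀ 𝒳 ⊆ ⋃₀ ℬ and X ∩ B is nonempty for every X ∈ 𝒳 and every B ∈ ℬ. -/
/-- For the power set functor, `ℬ` is a redistribution of `𝒳` (every `X ∈ 𝒳`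
is related to `ℬ` by the lifting of membership) iff `⋃₀ 𝒳 ⊆ ⋃₀ ℬ` and
`X ∩ B` is nonempty for every `X ∈ 𝒳` and `B ∈ ℬ`. -/
theorem powerset_redistribution {α : Type} (𝒳 ℬ : Set (Set α)) :
    (∀ X ∈ 𝒳, ∃ u : Set {p : α × Set α // p.1 ∈ p.2},
        (fun p => p.1.1) '' u = X ∧ (fun p => p.1.2) '' u = ℬ) ↔
    (⋃₀ 𝒳 ⊆ ⋃₀ ℬ ∧ ∀ X ∈ 𝒳, ∀ B ∈ ℬ, (X ∩ B).Nonempty) := by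
  constructor
  · intro h
    constructor
    · rintro x ⟨X, hX, hx⟩
      obtain ⟨u, h1, h2⟩ := h X hX
      rw [← h1] at hx
      obtain ⟨p, hp, rfl⟩ := hx
      exact ⟨p.1.2, h2 ▸ ⟨p, hp, rfl⟩, p.2⟩
    · intro X hX B hB
      obtain ⟨u, h1, h2⟩ := h X hX
      rw [← h2] at hB
      obtain ⟨p, hp, rfl⟩ := hB
      exact ⟨p.1.1, h1 ▸ ⟨p, hp, rfl⟩, p.2⟩
  · rintro ⟨hsub, hne⟩ X hX
    refine ⟨{p | p.1.1 ∈ X ∧ p.1.2 ∈ ℬ}, ?_, ?_⟩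
    · ext x
      constructor
      · rintro ⟨p, hp, rfl⟩; exact hp.1
      · intro hx
        obtain ⟨B, hB, hxB⟩ := hsub ⟨X, hX, hx⟩
        exact ⟨⟨(x, B), hxB⟩, ⟨hx, hB⟩, rfl⟩
    · ext B
      constructor
      · rintro ⟨p, hp, rfl⟩; exact hp.2
      · intro hB
        obtain ⟨x, hxX, hxB⟩ := hne X hX B hB
        exact ⟨⟨(x, B), hxB⟩, ⟨hxX, hB⟩, rfl⟩
end
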